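/- arXiv:1412.8063 — 3 statements merged into one kernel-verified Lean document; each statement's English description precedes it below -/
import Mathlib

section
/- Let Ŝ be a sampling of [n] with |Ŝ| = τ ≥ 1 almost surely. Then λ'(P(Ŝ)) = τ, where λ'(M) = sup{ h^T M h : h^T Diag(M) h ≤ 1 }. -/
/-!
Write `P = P(Ŝ)` and `D = Diag(P)`. Expanding the sum over outcomes,
`hᵀ P h = ∑_ω w_ω (∑_{i ∈ S_ω} h_i)²` and `hᵀ D h = ∑_ω w_ω ∑_{i ∈ S_ω} h_i²`.
Cauchy–Schwarz on each set of size `τ` gives `hᵀ P h ≤ τ · hᵀ D h`, and the constant vector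
`h = τ^{-1/2}` attains `hᵀ D h = 1` and `hᵀ P h = τ`.
-/

open Finset Matrix BigOperators

noncomputable def probMatrix {n : ℕ} {Ω : Type*} [Fintype Ω]
    (w : Ω → ℝ) (Shat : Ω → Finset (Fin n)) : Matrix (Fin n) (Fin n) ℝ :=
  fun i j => ∑ ω, if i ∈ Shat ω ∧ j ∈ Shat ω then w ω else 0

/-- Normalized largest eigenvalue: `λ′(M) = sup { hᵀ M h : hᵀ Diag(M) h ≤ 1 }`. -/
noncomputable def lambdaPrime {n : ℕ} (M : Matrix (Fin n) (Fin n) ℝ) : ℝ :=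
  sSup {r : ℝ | ∃ h : Fin n → ℝ,
    h ⬝ᵥ (Matrix.diagonal fun i => M i i).mulVec h ≤ 1 ∧ r = h ⬝ᵥ M.mulVec h}

theorem lambdaPrime_eq_of_le_of_attained {n : ℕ} {M : Matrix (Fin n) (Fin n) ℝ} {t : ℝ}
    (ht : 0 ≤ t)
    (hle : ∀ h : Fin n → ℝ, h ⬝ᵥ M *ᵥ h ≤ t * h ⬝ᵥ diagonal (fun i => M i i) *ᵥ h)
    (h₀ : Fin n → ℝ) (hD : h₀ ⬝ᵥ diagonal (fun i => M i i) *ᵥ h₀ ≤ 1)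
    (hM : h₀ ⬝ᵥ M *ᵥ h₀ = t) :
    lambdaPrime M = t := by
  refine IsGreatest.csSup_eq ⟨⟨h₀, hD, hM.symm⟩, ?_⟩
  rintro r ⟨h, hD, rfl⟩
  calc h ⬝ᵥ M *ᵥ h ≤ t * h ⬝ᵥ diagonal (fun i => M i i) *ᵥ h := hle h
    _ ≤ t * 1 := mul_le_mul_of_nonneg_left hD ht
    _ = t := mul_one t

section probMatrix

variable {n : ℕ} {Ω : Type*} [Fintype Ω] (w : Ω → ℝ) (Shat : Ω → Finset (Fin n))

theorem dotProduct_probMatrix_mulVec (h : Fin n → ℝ) :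
    h ⬝ᵥ probMatrix w Shat *ᵥ h = ∑ ω, w ω * (∑ i ∈ Shat ω, h i) ^ 2 := by
  simp only [probMatrix, dotProduct, mulVec, sum_mul, mul_sum, mul_ite, ite_mul, mul_zero,
    zero_mul]
  rw [sum_congr rfl fun i _ => sum_comm, sum_comm]
  refine sum_congr rfl fun ω _ => ?_
  simp only [ite_and, sum_ite_irrel, sum_const_zero, sum_ite_mem, univ_inter]
  rw [sq, sum_mul_sum, mul_sum]
  exact sum_congr rfl fun i _ => by rw [mul_sum]; exact sum_congr rfl fun j _ => by ring

theorem dotProduct_diagonal_probMatrix_mulVec (h : Fin n → ℝ) :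
    h ⬝ᵥ diagonal (fun i => probMatrix w Shat i i) *ᵥ h
      = ∑ ω, w ω * ∑ i ∈ Shat ω, h i ^ 2 := by
  simp only [probMatrix, dotProduct, mulVec_diagonal, and_self, sum_mul, mul_sum, ite_mul,
    mul_ite, mul_zero, zero_mul]
  rw [sum_comm]
  simp only [sum_ite_mem, univ_inter]
  exact sum_congr rfl fun ω _ => sum_congr rfl fun i _ => by ring

variable {w Shat} {τ : ℕ}

theorem sum_mul_card_eq_of_card_eq (hw1 : ∑ ω, w ω = 1)
    (hcard : ∀ ω, w ω ≠ 0 → #(Shat ω) = τ) (f : ℕ → ℝ) :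
    ∑ ω, w ω * f #(Shat ω) = f τ := by
  calc ∑ ω, w ω * f #(Shat ω) = ∑ ω, w ω * f τ := by
        refine sum_congr rfl fun ω _ => ?_
        by_cases hω : w ω = 0
        · simp only [hω, zero_mul]
        · rw [hcard ω hω]
    _ = f τ := by rw [← sum_mul, hw1, one_mul]

theorem dotProduct_probMatrix_mulVec_le (hw0 : ∀ ω, 0 ≤ w ω)
    (hcard : ∀ ω, w ω ≠ 0 → #(Shat ω) = τ) (h : Fin n → ℝ) :
    h ⬝ᵥ probMatrix w Shat *ᵥ h ≤ τ * h ⬝ᵥ diagonal (fun i => probMatrix w Shat i i) *ᵥ h := by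
  rw [dotProduct_probMatrix_mulVec, dotProduct_diagonal_probMatrix_mulVec, mul_sum]
  refine sum_le_sum fun ω _ => ?_
  by_cases hω : w ω = 0
  · simp only [hω, zero_mul, mul_zero, le_refl]
  · rw [mul_left_comm, ← hcard ω hω]
    exact mul_le_mul_of_nonneg_left sq_sum_le_card_mul_sum_sq (hw0 ω)

end probMatrix

theorem lambdaPrime_eq_tau_general
    {n : ℕ} {Ω : Type*} [Fintype Ω]
    (w : Ω → ℝ) (hw0 : ∀ ω, 0 ≤ w ω) (hw1 : ∑ ω, w ω = 1)
    (Shat : Ω → Finset (Fin n)) (τ : ℕ)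
    (hcard : ∀ ω, w ω ≠ 0 → (Shat ω).card = τ) :
    lambdaPrime (probMatrix w Shat) = τ := by
  set c : ℝ := (Real.sqrt τ)⁻¹
  have hc : c ^ 2 = (τ : ℝ)⁻¹ := by rw [inv_pow, Real.sq_sqrt τ.cast_nonneg]
  refine lambdaPrime_eq_of_le_of_attained τ.cast_nonneg
    (dotProduct_probMatrix_mulVec_le hw0 hcard) (fun _ => c) ?_ ?_
  · rw [dotProduct_diagonal_probMatrix_mulVec]
    simp only [sum_const, nsmul_eq_mul]
    rw [sum_mul_card_eq_of_card_eq hw1 hcard (fun k => k * c ^ 2), hc]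
    exact mul_inv_le_one -- also for `τ = 0`, where `τ⁻¹ = 0` and so `c = 0`
  · rw [dotProduct_probMatrix_mulVec]
    simp only [sum_const, nsmul_eq_mul]
    rw [sum_mul_card_eq_of_card_eq hw1 hcard (fun k => (k * c) ^ 2), mul_pow, hc]
    field_simp

theorem lambdaPrime_eq_tau
    {n : ℕ} {Ω : Type*} [Fintype Ω]
    (w : Ω → ℝ) (hw0 : ∀ ω, 0 ≤ w ω) (hw1 : ∑ ω, w ω = 1)
    (Shat : Ω → Finset (Fin n)) (τ : ℕ) (hτ : 1 ≤ τ)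
    (hcard : ∀ ω, w ω ≠ 0 → (Shat ω).card = τ) :
    lambdaPrime (probMatrix w Shat) = τ :=
  lambdaPrime_eq_tau_general w hw0 hw1 Shat τ hcard
end

section
/- For any sampling Ŝ of [n], the largest eigenvalue λ(P(Ŝ)) of its probability matrix satisfies E[|Ŝ|²]/n ≤ λ(P(Ŝ)) ≤ E[|Ŝ|]. -/
open Finset Matrix BigOperators

/-- Largest eigenvalue of a symmetric matrix: `λ(M) = sup { hᵀ M h : hᵀ h ≤ 1 }`. -/
noncomputable def lambdaMax {n : ℕ} (M : Matrix (Fin n) (Fin n) ℝ) : ℝ :=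
  sSup {r : ℝ | ∃ h : Fin n → ℝ, h ⬝ᵥ h ≤ 1 ∧ r = h ⬝ᵥ M.mulVec h}

lemma quadform_eq {n : ℕ} {Ω : Type*} [Fintype Ω]
    (w : Ω → ℝ) (Shat : Ω → Finset (Fin n)) (h : Fin n → ℝ) :
    h ⬝ᵥ (probMatrix w Shat).mulVec h = ∑ ω, w ω * (∑ i ∈ Shat ω, h i) ^ 2 := by
  have : ∀ ω, w ω * (∑ i ∈ Shat ω, h i) ^ 2
      = ∑ i, ∑ j, h i * (if i ∈ Shat ω ∧ j ∈ Shat ω then w ω else 0) * h j := by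
    intro ω
    rw [sq, Finset.sum_mul_sum]
    rw [Finset.mul_sum]
    rw [← Finset.sum_subset (Finset.subset_univ (Shat ω))]
    · apply Finset.sum_congr rfl
      intro i hi
      rw [Finset.mul_sum, ← Finset.sum_subset (Finset.subset_univ (Shat ω))]
      · apply Finset.sum_congr rfl
        intro j hj
        simp [hi, hj]; ring
      · intro j _ hj; simp [hj]
    · intro i _ hi; simp [hi]
  simp only [this]
  rw [Finset.sum_comm]
  simp only [dotProduct, mulVec, probMatrix, Finset.mul_sum]
  congr 1; ext i
  rw [Finset.sum_comm]
  congr 1; ext j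
  rw [Finset.sum_mul, Finset.mul_sum]
  simp [mul_assoc]

theorem lambdaMax_bounds
    {n : ℕ} {Ω : Type*} [Fintype Ω]
    (w : Ω → ℝ) (hw0 : ∀ ω, 0 ≤ w ω) (hw1 : ∑ ω, w ω = 1)
    (Shat : Ω → Finset (Fin n)) :
    (∑ ω, w ω * ((Shat ω).card : ℝ) ^ 2) / n ≤ lambdaMax (probMatrix w Shat) ∧
      lambdaMax (probMatrix w Shat) ≤ ∑ ω, w ω * ((Shat ω).card : ℝ) := by
  set B : ℝ := ∑ ω, w ω * ((Shat ω).card : ℝ) with hB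
  have hB0 : 0 ≤ B := Finset.sum_nonneg fun ω _ => mul_nonneg (hw0 ω) (Nat.cast_nonneg _)
  have hbound : ∀ r ∈ {r : ℝ | ∃ h : Fin n → ℝ, h ⬝ᵥ h ≤ 1 ∧
      r = h ⬝ᵥ (probMatrix w Shat).mulVec h}, r ≤ B := by
    rintro r ⟨h, hh, rfl⟩
    rw [quadform_eq]
    apply Finset.sum_le_sum
    intro ω _
    apply mul_le_mul_of_nonneg_left _ (hw0 ω)
    calc (∑ i ∈ Shat ω, h i) ^ 2
        ≤ (Shat ω).card * ∑ i ∈ Shat ω, h i ^ 2 := sq_sum_le_card_mul_sum_sq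
      _ ≤ (Shat ω).card * 1 := by
          apply mul_le_mul_of_nonneg_left _ (Nat.cast_nonneg _)
          refine le_trans (Finset.sum_le_sum_of_subset_of_nonneg
            (Finset.subset_univ _) (fun i _ _ => sq_nonneg _)) ?_
          calc ∑ i, h i ^ 2 = h ⬝ᵥ h := by simp [dotProduct, sq]
            _ ≤ 1 := hh
      _ = (Shat ω).card := mul_one _
  constructor
  · -- lower bound
    have hmem : (∑ ω, w ω * ((Shat ω).card : ℝ) ^ 2) / n ∈
        {r : ℝ | ∃ h : Fin n → ℝ, h ⬝ᵥ h ≤ 1 ∧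
          r = h ⬝ᵥ (probMatrix w Shat).mulVec h} := by
      refine ⟨fun _ => 1 / Real.sqrt n, ?_, ?_⟩
      · simp only [dotProduct, Finset.sum_const, Finset.card_univ, Fintype.card_fin, nsmul_eq_mul]
        rcases Nat.eq_zero_or_pos n with h0 | hpos
        · simp [h0]
        · have : Real.sqrt n ≠ 0 := by positivity
          rw [div_mul_div_comm, one_mul, Real.mul_self_sqrt (by positivity)]
          rw [mul_one_div, div_self (by positivity : (0:ℝ) < n).ne']
      · rw [quadform_eq, Finset.sum_div]
        apply Finset.sum_congr rfl
        intro ω _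
        rw [Finset.sum_const, nsmul_eq_mul, mul_one_div, div_pow,
          Real.sq_sqrt (by positivity), mul_div_assoc]
    exact le_csSup ⟨B, hbound⟩ hmem
  · exact Real.sSup_le hbound hB0
end

section
/- Let Ŝ be the τ-nice sampling on [n] with 1 ≤ τ ≤ n, and let J ⊆ [n] be nonempty. Then the restricted sampling J ∩ Ŝ satisfies λ'(P(J ∩ Ŝ)) = 1 + (|J|−1)(τ−1)/max(n−1,1). -/
/-!
Counting the τ-subsets of `[n]` that contain a given `m`-set gives `P(t ⊆ Ŝ) = τ^(m) / n^(m)`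
(falling factorials), so `P(Ŝ)` has diagonal `a = τ/n` and off-diagonal `a·c` with
`c = (τ-1)/(n-1)`. On `J` the quadratic form of the restricted matrix is
`a·((1-c)‖h‖² + c(Σ h)²)` while the diagonal one is `a‖h‖²`; Cauchy–Schwarz
`(Σ h)² ≤ |J|‖h‖²` bounds `λ'` by `1 + (|J|-1)c`, attained by `h` constant.
-/

open Finset Matrix BigOperators

/-- Probability matrix of a sampling given by its probability mass function. -/
noncomputable def probMatrixPMF {n : ℕ} (p : Finset (Fin n) → ℝ) : Matrix (Fin n) (Fin n) ℝ :=
  fun i j => ∑ S : Finset (Fin n), if i ∈ S ∧ j ∈ S then p S else 0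

/-- The τ-nice sampling: uniform over subsets of cardinality τ. -/
noncomputable def tauNice (n τ : ℕ) : Finset (Fin n) → ℝ :=
  fun S => if S.card = τ then 1 / (n.choose τ : ℝ) else 0

lemma card_filter_powersetCard_subset_mul_descFactorial {α : Type*} [DecidableEq α]
    {s t : Finset α} (hst : s ⊆ t) (k : ℕ) :
    #{u ∈ t.powersetCard k | s ⊆ u} * (#t).descFactorial #s =
      k.descFactorial #s * (#t).choose k := by
  rcases le_or_gt #s k with hsk | hks
  · rw [card_filter_powersetCard_subset s t k hst hsk, Nat.descFactorial_eq_factorial_mul_choose,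
      Nat.descFactorial_eq_factorial_mul_choose, mul_assoc, mul_comm (k.choose #s),
      Nat.choose_mul hsk]
    ring
  · rw [Nat.descFactorial_eq_zero_iff_lt.2 hks, zero_mul, mul_eq_zero, card_eq_zero,
      filter_eq_empty_iff]
    refine Or.inl fun u hu hsu => ?_
    have := card_le_card hsu
    rw [(mem_powersetCard.1 hu).2] at this
    omega

lemma sum_tauNice_of_subset {n τ : ℕ} (hτn : τ ≤ n) (t : Finset (Fin n)) :
    ∑ S : Finset (Fin n), (if t ⊆ S then tauNice n τ S else 0) =
      (τ.descFactorial #t : ℝ) / n.descFactorial #t := by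
  have hsum : ∑ S : Finset (Fin n), (if t ⊆ S then tauNice n τ S else 0) =
      #{S ∈ univ.powersetCard τ | t ⊆ S} / n.choose τ := by
    simp [tauNice, ← powerset_univ, powersetCard_eq_filter, filter_filter, ← ite_and, sum_ite,
      and_comm, div_eq_mul_inv]
  have hchoose : (0 : ℝ) < n.choose τ := by exact_mod_cast Nat.choose_pos hτn
  have hdesc : (0 : ℝ) < n.descFactorial #t := by
    exact_mod_cast Nat.descFactorial_pos.2 (by simpa using card_le_univ t)
  rw [hsum, div_eq_div_iff hchoose.ne' hdesc.ne']
  exact_mod_cast by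
    simpa using card_filter_powersetCard_subset_mul_descFactorial (subset_univ t) τ

lemma probMatrixPMF_apply_eq_sum_pair {n : ℕ} (p : Finset (Fin n) → ℝ) (i j : Fin n) :
    probMatrixPMF p i j = ∑ S : Finset (Fin n), if {i, j} ⊆ S then p S else 0 := by
  simp only [probMatrixPMF, insert_subset_iff, singleton_subset_iff]

lemma probMatrixPMF_tauNice_diag {n τ : ℕ} (hτn : τ ≤ n) (i : Fin n) :
    probMatrixPMF (tauNice n τ) i i = τ / n := by
  rw [probMatrixPMF_apply_eq_sum_pair, sum_tauNice_of_subset hτn, pair_eq_singleton,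
    card_singleton, Nat.descFactorial_one, Nat.descFactorial_one]

lemma probMatrixPMF_tauNice_of_ne {n τ : ℕ} (hτn : τ ≤ n) {i j : Fin n} (hij : i ≠ j) :
    probMatrixPMF (tauNice n τ) i j = τ * (τ - 1) / (n * (n - 1)) := by
  rw [probMatrixPMF_apply_eq_sum_pair, sum_tauNice_of_subset hτn, card_pair hij,
    Nat.cast_descFactorial_two, Nat.cast_descFactorial_two]

section CompoundSymmetric

variable {ι : Type*} [DecidableEq ι]

def compoundSymmetricOn (J : Finset ι) (a b : ℝ) : Matrix ι ι ℝ :=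
  fun i j => if i ∈ J ∧ j ∈ J then (if i = j then a else b) else 0

lemma dotProduct_compoundSymmetricOn_mulVec [Fintype ι] (J : Finset ι) (a b : ℝ) (h : ι → ℝ) :
    h ⬝ᵥ compoundSymmetricOn J a b *ᵥ h =
      (a - b) * ∑ i ∈ J, h i ^ 2 + b * (∑ i ∈ J, h i) ^ 2 := by
  have hrow : ∀ i ∈ J, (compoundSymmetricOn J a b *ᵥ h) i = (a - b) * h i + b * ∑ j ∈ J, h j := by
    intro i hi
    simp only [mulVec, dotProduct, compoundSymmetricOn, hi, true_and, ite_mul, zero_mul,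
      ← sum_filter, filter_mem_eq_inter, univ_inter]
    rw [sum_congr rfl fun j _ => (show (if i = j then a * h j else b * h j) =
      b * h j + (if i = j then (a - b) * h j else 0) by split_ifs <;> ring),
      sum_add_distrib, sum_ite_eq, if_pos hi, mul_sum]
    ring
  have hzero : ∀ i ∉ J, (compoundSymmetricOn J a b *ᵥ h) i = 0 := by
    intro i hi
    simp [mulVec, dotProduct, compoundSymmetricOn, hi]
  rw [dotProduct, ← sum_subset (subset_univ J) fun i _ hi => by rw [hzero i hi, mul_zero],
    sum_congr rfl fun i hi => by rw [hrow i hi]]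
  calc ∑ i ∈ J, h i * ((a - b) * h i + b * ∑ j ∈ J, h j)
      = ∑ i ∈ J, ((a - b) * h i ^ 2 + (b * ∑ j ∈ J, h j) * h i) :=
        sum_congr rfl fun i _ => by ring
    _ = _ := by rw [sum_add_distrib, ← mul_sum, ← mul_sum]; ring

lemma diagonal_diag_compoundSymmetricOn (J : Finset ι) (a b : ℝ) :
    diagonal (fun i => compoundSymmetricOn J a b i i) = compoundSymmetricOn J a 0 := by
  ext i j
  by_cases hij : i = j
  · subst hij; simp [compoundSymmetricOn]
  · simp [compoundSymmetricOn, hij]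

end CompoundSymmetric

lemma lambdaPrime_compoundSymmetricOn {n : ℕ} {J : Finset (Fin n)} (hJ : J.Nonempty) {a b : ℝ}
    (ha : 0 < a) (hb : 0 ≤ b) :
    lambdaPrime (compoundSymmetricOn J a b) = 1 + (#J - 1) * (b / a) := by
  have hJ1 : (1 : ℝ) ≤ #J := by exact_mod_cast hJ.card_pos
  have hvalue : 1 + (#J - 1) * (b / a) = (a + (#J - 1) * b) / a := by field_simp
  refine IsGreatest.csSup_eq ⟨?_, ?_⟩
  · set t := √(1 / (a * #J))
    have ht : t ^ 2 = 1 / (a * #J) := Real.sq_sqrt (by positivity)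
    refine ⟨fun _ => t, ?_, ?_⟩
    · simp only [diagonal_diag_compoundSymmetricOn, dotProduct_compoundSymmetricOn_mulVec,
        sum_const, nsmul_eq_mul, ht, sub_zero, zero_mul, add_zero]
      exact le_of_eq (by field_simp)
    · simp only [dotProduct_compoundSymmetricOn_mulVec, sum_const, nsmul_eq_mul, mul_pow, ht,
        hvalue]
      field_simp
      ring
  · rintro r ⟨h, hdiag, rfl⟩
    simp only [diagonal_diag_compoundSymmetricOn, dotProduct_compoundSymmetricOn_mulVec, sub_zero,
      zero_mul, add_zero] at hdiag
    have hsq : ∑ i ∈ J, h i ^ 2 ≤ 1 / a := by rw [le_div_iff₀ ha]; linarith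
    rw [dotProduct_compoundSymmetricOn_mulVec, hvalue, ← mul_one_div]
    calc (a - b) * ∑ i ∈ J, h i ^ 2 + b * (∑ i ∈ J, h i) ^ 2
        ≤ (a - b) * ∑ i ∈ J, h i ^ 2 + b * (#J * ∑ i ∈ J, h i ^ 2) := by
          gcongr; exact sq_sum_le_card_mul_sum_sq
      _ = (a + (#J - 1) * b) * ∑ i ∈ J, h i ^ 2 := by ring
      _ ≤ (a + (#J - 1) * b) * (1 / a) := by gcongr

theorem lambdaPrime_restriction_tauNice
    {n τ : ℕ} (hτ1 : 1 ≤ τ) (hτn : τ ≤ n) (J : Finset (Fin n)) (hJ : J.Nonempty) :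
    lambdaPrime (fun i j => if i ∈ J ∧ j ∈ J then probMatrixPMF (tauNice n τ) i j else 0) =
      1 + ((J.card : ℝ) - 1) * ((τ : ℝ) - 1) / (max (n - 1) 1 : ℕ) := by
  have ha : (0 : ℝ) < τ / n := div_pos (by exact_mod_cast hτ1) (by exact_mod_cast hτ1.trans hτn)
  have hc : (0 : ℝ) ≤ (τ - 1) / (max (n - 1) 1 : ℕ) :=
    div_nonneg (by simpa using hτ1) (Nat.cast_nonneg _)
  have hoff : ∀ i j : Fin n, i ≠ j →
      probMatrixPMF (tauNice n τ) i j = τ / n * ((τ - 1) / (max (n - 1) 1 : ℕ)) := by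
    intro i j hij
    have hn : 2 ≤ n := by have := Fin.val_ne_of_ne hij; omega
    rw [probMatrixPMF_tauNice_of_ne hτn hij, max_eq_left (by omega), Nat.cast_sub (by omega),
      Nat.cast_one, mul_div_mul_comm]
  have hM : (fun i j => if i ∈ J ∧ j ∈ J then probMatrixPMF (tauNice n τ) i j else 0) =
      compoundSymmetricOn J (τ / n) (τ / n * ((τ - 1) / (max (n - 1) 1 : ℕ))) := by
    ext i j
    unfold compoundSymmetricOn
    split_ifs with _ hij
    · rw [hij, probMatrixPMF_tauNice_diag hτn]
    · exact hoff i j hij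
    · rfl
  rw [hM, lambdaPrime_compoundSymmetricOn hJ ha (mul_nonneg ha.le hc),
    mul_div_cancel_left₀ _ ha.ne', mul_div_assoc]
end
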